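/- Let 𝕜 be an algebraically closed field of characteristic 0 and let A = diag(λ₁, …, λ_k) be a diagonal invertible matrix whose eigenvalues λ₁, …, λ_k are multiplicatively independent. Then the forward orbit of the point α = (1, 1, …, 1) under the map x ↦ A·x is Zariski dense in affine k-space; equivalently, no nonzero polynomial F ∈ 𝕜[x₁,…,x_k] vanishes at (λ₁^n, …, λ_k^n) for all n ∈ ℕ₀. -/

import Mathlib

/-!
Along the orbit, `F(λⁿ) = ∑_d c_d (λ^d)ⁿ` is a combination of the geometric sequences
`n ↦ (λ^d)ⁿ`, one for each monomial `d` of `F`. Multiplicative independence makes the values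
`λ^d` pairwise distinct, and distinct geometric sequences are linearly independent (Artin's
independence of characters of `ℕ`), so a combination vanishing for all `n` has zero coefficients.
-/

open MvPolynomial

theorem Matrix.diagonal_pow_mulVec_one {ι R : Type*} [Fintype ι] [DecidableEq ι] [CommSemiring R]
    (v : ι → R) (n : ℕ) : (Matrix.diagonal v ^ n).mulVec (fun _ => 1) = v ^ n := by
  ext i
  simp [Matrix.diagonal_pow, Matrix.mulVec_diagonal]

theorem linearIndependent_pow_of_injective {ι K : Type*} [Field K] {μ : ι → K}
    (hμ : Function.Injective μ) : LinearIndependent K fun i (n : ℕ) => μ i ^ n := by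
  have hchar : LinearIndependent K fun i => ⇑(powersHom K (μ i)) :=
    (linearIndependent_monoidHom (Multiplicative ℕ) K).comp _ fun i j hij => hμ <| by
      simpa using DFunLike.congr_fun hij (Multiplicative.ofAdd 1)
  exact hchar.map' (LinearMap.funLeft K K Multiplicative.ofAdd) <|
    LinearMap.ker_eq_bot.mpr <| LinearMap.funLeft_injective_of_surjective _ _ _
      Multiplicative.ofAdd.surjective

theorem injective_prod_pow_of_zpow_independent {ι G : Type*} [Fintype ι] [CommGroupWithZero G]
    {x : ι → G} (hx : ∀ i, x i ≠ 0) (hindep : ∀ c : ι → ℤ, ∏ i, x i ^ c i = 1 → c = 0) :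
    Function.Injective fun d : ι →₀ ℕ => ∏ i, x i ^ d i := by
  intro d e hde
  have hquot : ∏ i, x i ^ ((d i : ℤ) - e i) = 1 := by
    simp only [zpow_sub₀ (hx _), Finset.prod_div_distrib, zpow_natCast]
    exact div_eq_one_iff_eq (Finset.prod_ne_zero_iff.2 fun i _ => pow_ne_zero _ (hx i)) |>.2 hde
  ext i
  simpa [sub_eq_zero] using congrFun (hindep _ hquot) i

theorem MvPolynomial.eval_pow_eq_sum {σ R : Type*} [Fintype σ] [CommSemiring R] (x : σ → R) (n : ℕ)
    (F : MvPolynomial σ R) :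
    eval (x ^ n) F = ∑ d ∈ F.support, coeff d F * (∏ i, x i ^ d i) ^ n := by
  simp only [eval_eq', Pi.pow_apply, ← pow_mul, ← Finset.prod_pow, mul_comm n]

theorem MvPolynomial.eq_zero_of_forall_eval_pow_eq_zero {σ K : Type*} [Fintype σ] [Field K]
    {x : σ → K} (hx : Function.Injective fun d : σ →₀ ℕ => ∏ i, x i ^ d i)
    {F : MvPolynomial σ K} (hF : ∀ n : ℕ, eval (x ^ n) F = 0) : F = 0 := by
  have hcomb : ∑ d ∈ F.support, coeff d F • (fun n : ℕ => (∏ i, x i ^ d i) ^ n) = 0 := by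
    ext n
    simpa [← eval_pow_eq_sum] using hF n
  ext d
  rw [coeff_zero]
  by_cases hd : d ∈ F.support
  · have hli := linearIndependent_pow_of_injective hx
    exact linearIndependent_iff'.mp hli F.support (fun d => coeff d F) hcomb d hd
  · exact notMem_support_iff.mp hd

theorem stmt9_general {𝕜 : Type*} [Field 𝕜] {k : ℕ}
    (lam : Fin k → 𝕜) (h0 : ∀ i, lam i ≠ 0)
    (hindep : ∀ c : Fin k → ℤ, ∏ i, lam i ^ c i = 1 → c = 0)
    (F : MvPolynomial (Fin k) 𝕜) (hF : F ≠ 0) :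
    ∃ n : ℕ, MvPolynomial.eval
      ((Matrix.diagonal lam ^ n).mulVec (fun _ => (1 : 𝕜))) F ≠ 0 := by
  classical
  by_contra! hvanish
  simp only [Matrix.diagonal_pow_mulVec_one] at hvanish
  exact hF <| eq_zero_of_forall_eval_pow_eq_zero
    (injective_prod_pow_of_zpow_independent h0 hindep) hvanish

/-- if `A = diag(λ₁,…,λ_k)` has multiplicatively independent (nonzero)
eigenvalues, then the orbit of `(1,…,1)` under `x ↦ A·x` is Zariski dense in `𝔸^k`:
no nonzero polynomial vanishes on the whole orbit. -/
theorem stmt9 {𝕜 : Type*} [Field 𝕜] [IsAlgClosed 𝕜] [CharZero 𝕜] {k : ℕ}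
    (lam : Fin k → 𝕜) (h0 : ∀ i, lam i ≠ 0)
    (hindep : ∀ c : Fin k → ℤ, ∏ i, lam i ^ c i = 1 → c = 0)
    (F : MvPolynomial (Fin k) 𝕜) (hF : F ≠ 0) :
    ∃ n : ℕ, MvPolynomial.eval
      ((Matrix.diagonal lam ^ n).mulVec (fun _ => (1 : 𝕜))) F ≠ 0 :=
  stmt9_general lam h0 hindep F hF
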